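/- arXiv:1710.04146 — 2 statements merged into one kernel-verified Lean document; each statement's English description precedes it below -/
import Mathlib

section
/- Let d be a positive integer, let Box ⊆ ℝ^d be a full-dimensional lattice polytope with 0 in its interior, and let e₁,…,e_d denote the standard basis vectors of ℤ^d. Define c(Box) = ∑_{j=1}^{d} 4/α_{e_j}. If f₁,…,fₙ is normalized Fano data on Box, then n ≤ c(Box). -/
open scoped BigOperators

noncomputable section

/-- Embedding of a lattice point of `ℤ^d × ℤ` into `ℝ^d × ℝ`. -/
def latticeEmbed (d : ℕ) (p : (Fin d → ℤ) × ℤ) : (Fin d → ℝ) × ℝ :=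
  (fun i => (p.1 i : ℝ), (p.2 : ℝ))

/-- `Box ⊆ ℝ^d` is a lattice polytope: the convex hull of a finite set of lattice points. -/
def IsLatticePolytope (d : ℕ) (Box : Set (Fin d → ℝ)) : Prop :=
  ∃ S : Finset (Fin d → ℤ),
    Box = convexHull ℝ ((fun v : Fin d → ℤ => fun i => (v i : ℝ)) '' (S : Set (Fin d → ℤ)))

/-- The pairing of `x ∈ ℝ^d` with an integral vector `u ∈ ℤ^d`. -/
def dotZ (d : ℕ) (x : Fin d → ℝ) (u : Fin d → ℤ) : ℝ := ∑ i, x i * (u i : ℝ)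

/-- `f` is an integral concave piecewise-affine function on `Box`: there is a finite set
`S ⊆ ℤ^d × ℤ` such that `Box` is the projection of `conv S` and `f x` is the largest `t`
with `(x, t) ∈ conv S`. -/
def IsICPA (d : ℕ) (Box : Set (Fin d → ℝ)) (f : (Fin d → ℝ) → ℝ) : Prop :=
  ∃ S : Finset ((Fin d → ℤ) × ℤ),
    Prod.fst '' (convexHull ℝ (latticeEmbed d '' (S : Set ((Fin d → ℤ) × ℤ)))) = Box ∧
    ∀ x ∈ Box,
      IsGreatest {t : ℝ | (x, t) ∈ convexHull ℝ (latticeEmbed d '' (S : Set ((Fin d → ℤ) × ℤ)))}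
        (f x)

/-- Every facet of the graph of `f` lies at height one. -/
def AtHeightOne (d : ℕ) (Box : Set (Fin d → ℝ)) (f : (Fin d → ℝ) → ℝ) : Prop :=
  ∀ x ∈ Box, ∃ (u : Fin d → ℤ) (m : ℤ),
    |dotZ d x u + (m : ℝ) * f x| = 1 ∧
    ∀ y ∈ Box, dotZ d y u + (m : ℝ) * f y ≤ dotZ d x u + (m : ℝ) * f x

/-- A combinatorial divisorial polytope (CDP) with base in `ℝ^d`. -/
structure CDP (d : ℕ) where
  box : Set (Fin d → ℝ)
  funcs : List ((Fin d → ℝ) → ℝ)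
  lattice : IsLatticePolytope d box
  fullDim : (interior box).Nonempty
  icpa : ∀ f ∈ funcs, IsICPA d box f
  posSum : ∀ x ∈ interior box, 0 < (funcs.map (fun f => f x)).sum

/-- Two functions agree on a set. -/
def EqOnBox (d : ℕ) (B : Set (Fin d → ℝ)) (f g : (Fin d → ℝ) → ℝ) : Prop :=
  ∀ x ∈ B, f x = g x

/-- Move (i): addition of the zero function. -/
def MoveZero (d : ℕ) (P Q : CDP d) : Prop :=
  Q.box = P.box ∧
    List.Forall₂ (EqOnBox d P.box) Q.funcs (P.funcs ++ [fun _ => (0 : ℝ)])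

/-- Move (ii): permutation of the functions. -/
def MovePerm (d : ℕ) (P Q : CDP d) : Prop :=
  Q.box = P.box ∧ ∃ L, List.Perm L P.funcs ∧ List.Forall₂ (EqOnBox d P.box) Q.funcs L

/-- Move (iii): integral affine transformation of the base. -/
def MoveAffine (d : ℕ) (P Q : CDP d) : Prop :=
  ∃ (A B : Matrix (Fin d) (Fin d) ℤ) (t : Fin d → ℤ),
    A * B = 1 ∧ B * A = 1 ∧
    Q.box = (fun x : Fin d → ℝ => fun i => (∑ j, (A i j : ℝ) * x j) + (t i : ℝ)) '' P.box ∧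
    List.Forall₂ (EqOnBox d Q.box) Q.funcs
      (P.funcs.map (fun f => f ∘ fun x : Fin d → ℝ => fun i => ∑ j, (B i j : ℝ) * (x j - (t j : ℝ))))

/-- Move (iv): translation by integers summing to zero. -/
def MoveTranslate (d : ℕ) (P Q : CDP d) : Prop :=
  Q.box = P.box ∧ ∃ α : List ℤ, α.length = P.funcs.length ∧ α.sum = 0 ∧
    List.Forall₂ (EqOnBox d P.box) Q.funcs
      (List.zipWith (fun f (a : ℤ) => fun x => f x + (a : ℝ)) P.funcs α)

/-- Move (v): shearing by a covector with integral coefficients summing to zero. -/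
def MoveShear (d : ℕ) (P Q : CDP d) : Prop :=
  Q.box = P.box ∧ ∃ (v : Fin d → ℤ) (β : List ℤ), β.length = P.funcs.length ∧ β.sum = 0 ∧
    List.Forall₂ (EqOnBox d P.box) Q.funcs
      (List.zipWith (fun f (b : ℤ) => fun x => f x + (b : ℝ) * dotZ d x v) P.funcs β)

/-- One elementary move between CDPs. -/
def CDPMove (d : ℕ) (P Q : CDP d) : Prop :=
  MoveZero d P Q ∨ MovePerm d P Q ∨ MoveAffine d P Q ∨ MoveTranslate d P Q ∨ MoveShear d P Q

/-- Equivalence of CDPs: the smallest equivalence relation generated by the moves. -/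
def CDPEquiv (d : ℕ) : CDP d → CDP d → Prop := Relation.EqvGen (CDPMove d)

/-- The on-the-nose Fano conditions for a CDP. -/
def IsFanoWitness (d : ℕ) (P : CDP d) : Prop :=
  ∃ a : List ℤ, a.sum = -2 ∧
    (0 : Fin d → ℝ) ∈ interior P.box ∧
    List.Forall₂ (fun f (ai : ℤ) =>
      AtHeightOne d P.box (fun x => f x + (ai : ℝ) + 1) ∧ 0 < f 0 + (ai : ℝ) + 1)
      P.funcs a ∧
    ∀ x ∈ frontier P.box,
      (P.funcs.map (fun f => f x)).sum = 0 ∨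
      ∃ u : Fin d → ℤ, dotZ d x u = 1 ∧ ∀ y ∈ P.box, dotZ d y u ≤ 1

/-- A CDP is Fano if it is equivalent to one satisfying the Fano conditions. -/
def IsFano (d : ℕ) (P : CDP d) : Prop := ∃ Q : CDP d, CDPEquiv d P Q ∧ IsFanoWitness d Q

/-- A CDP is toric if it is equivalent to one with at most two functions. -/
def IsToric (d : ℕ) (P : CDP d) : Prop := ∃ Q : CDP d, CDPEquiv d P Q ∧ Q.funcs.length ≤ 2

/-- `f` agrees on `Box` with an affine function with integral slope and constant. -/
def IsIntegralAffineOn (d : ℕ) (Box : Set (Fin d → ℝ)) (f : (Fin d → ℝ) → ℝ) : Prop :=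
  ∃ (u : Fin d → ℤ) (c : ℤ), ∀ x ∈ Box, f x = dotZ d x u + (c : ℝ)

/-- Normalized Fano data on `Box`: the translated functions `Ψᵢ' = Ψᵢ + aᵢ + 1` of a
normalized Fano CDP. -/
def NormalizedFanoData (d n : ℕ) (Box : Set (Fin d → ℝ))
    (f : Fin n → (Fin d → ℝ) → ℝ) : Prop :=
  (∀ i, IsICPA d Box (f i)) ∧
  (∀ i, AtHeightOne d Box (f i)) ∧
  (∀ i, 0 < f i 0) ∧
  (∀ i, ¬ IsIntegralAffineOn d Box (f i)) ∧
  (∀ x ∈ Box, (n : ℝ) - 2 ≤ ∑ i, f i x) ∧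
  (∀ x ∈ interior Box, (n : ℝ) - 2 < ∑ i, f i x) ∧
  (∀ x ∈ frontier Box,
    (∑ i, f i x) = (n : ℝ) - 2 ∨
    ∃ u : Fin d → ℤ, dotZ d x u = 1 ∧ ∀ y ∈ Box, dotZ d y u ≤ 1)

/-- `α_v = min{1, max{α ≥ 0 : ±αv ∈ Box}}`. -/
def alphaV (d : ℕ) (Box : Set (Fin d → ℝ)) (v : Fin d → ℤ) : ℝ :=
  min 1 (sSup {α : ℝ | 0 ≤ α ∧ (fun i => α * (v i : ℝ)) ∈ Box ∧
    (fun i => -(α * (v i : ℝ))) ∈ Box})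

/-- A primitive integral vector: the gcd of its coordinates is 1. -/
def IsPrimitive (d : ℕ) (v : Fin d → ℤ) : Prop := Finset.univ.gcd v = 1

/-- `f` restricted to `Box ∩ ℝ·v` is affine. -/
def AffineOnLine (d : ℕ) (Box : Set (Fin d → ℝ)) (v : Fin d → ℤ)
    (f : (Fin d → ℝ) → ℝ) : Prop :=
  ∃ s c : ℝ, ∀ t : ℝ, (fun i => t * (v i : ℝ)) ∈ Box →
    f (fun i => t * (v i : ℝ)) = s * t + c

/-- The interval `[a,b]` as a subset of `ℝ¹ = (Fin 1 → ℝ)`. -/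
def intervalBox (a b : ℤ) : Set (Fin 1 → ℝ) := {p : Fin 1 → ℝ | (a : ℝ) ≤ p 0 ∧ p 0 ≤ (b : ℝ)}

/-- The `d`-dimensional cross polytope `conv{±e₁, …, ±e_d}`. -/
def crossPolytope (d : ℕ) : Set (Fin d → ℝ) :=
  convexHull ℝ {x : Fin d → ℝ | ∃ j : Fin d, x = Pi.single j 1 ∨ x = -Pi.single j 1}

/-!
Each `fᵢ` is concave, and `fᵢ(0) ∈ {1} ∪ (0, 1/2]`: at the interior point `0` a height-one
functional `⟨y, u⟩ + m fᵢ(y)` has `m = 1` or `|m| ≥ 2`, since for `m ≤ 0` it is convex and maximal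
at an interior point, hence constant, which makes `fᵢ` integral affine or contradicts `|·| = 1`.
Put `δᵢⱼ = 1 - (fᵢ(αⱼeⱼ) + fᵢ(-αⱼeⱼ))/2`. Concavity gives `δᵢⱼ ≥ 1 - fᵢ(0) ≥ 0`, and
`∑ᵢ fᵢ ≥ n - 2` at `±αⱼeⱼ` gives `∑ᵢ δᵢⱼ ≤ 2`. Every `i` has an axis `j` with `δᵢⱼ ≥ αⱼ/2`: any
axis if `fᵢ(0) ≤ 1/2`; if `fᵢ(0) = 1` and there were none, then `fᵢ` would have a supporting
hyperplane `t = 1 - ⟨y, u⟩` with `u` integral at every interior point, and the slopes at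
`±(αⱼ/2)eⱼ` would differ by less than one in coordinate `j`, hence agree; so all slopes coincide
and `fᵢ` would be integral affine. At most `2/(αⱼ/2) = 4/αⱼ` indices are assigned to axis `j`.
-/

open Set Filter Topology

section ConvexAux

variable {E : Type*} [TopologicalSpace E] [AddCommGroup E] [Module ℝ E] [ContinuousAdd E]
  [ContinuousSMul ℝ E]

lemma exists_pos_forall_add_smul_mem {s : Set E} {x : E} (hx : x ∈ interior s) (v : E) :
    ∃ ε > 0, ∀ t : ℝ, |t| ≤ ε → x + t • v ∈ s := by
  have hcont : Tendsto (fun t : ℝ => x + t • v) (𝓝 0) (𝓝 x) := by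
    have h : Continuous fun t : ℝ => x + t • v := by fun_prop
    simpa using h.tendsto 0
  obtain ⟨ε, hε, hmem⟩ :=
    Metric.eventually_nhds_iff.1 (hcont.eventually (mem_interior_iff_mem_nhds.1 hx))
  refine ⟨ε / 2, half_pos hε, fun t ht => hmem ?_⟩
  rw [Real.dist_eq, sub_zero]
  linarith

lemma ConvexOn.eq_of_isMaxOn_of_mem_interior {s : Set E} {φ : E → ℝ} {x : E}
    (hφ : ConvexOn ℝ s φ) (hx : x ∈ interior s) (hmax : IsMaxOn φ s x) {y : E} (hy : y ∈ s) :
    φ y = φ x := by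
  obtain ⟨ε, hε, hmem⟩ := exists_pos_forall_add_smul_mem hx (x - y)
  have hw := hmem ε (abs_of_pos hε).le
  -- `x` divides the segment from `y` to `x + ε • (x - y)` in the ratio `1 : ε`
  have hseg : x ∈ openSegment ℝ y (x + ε • (x - y)) := by
    refine ⟨ε / (1 + ε), 1 / (1 + ε), by positivity, by positivity, by field_simp; ring, ?_⟩
    match_scalars
    · ring
    · field_simp
  exact le_antisymm (hmax hy) (hφ.le_left_of_right_le hy hw hseg (hmax hw))

end ConvexAux

lemma ConcaveOn.add_apply_neg_le {E : Type*} [AddCommGroup E] [Module ℝ E] {s : Set E}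
    {f : E → ℝ} (hf : ConcaveOn ℝ s f) {x : E} (hx : x ∈ s) (hx' : -x ∈ s) :
    f x + f (-x) ≤ 2 * f 0 := by
  have h := hf.2 hx hx' one_half_pos.le one_half_pos.le (add_halves 1)
  rw [smul_neg, add_neg_cancel] at h
  simp only [smul_eq_mul] at h
  linarith

open Finset in
lemma card_le_sum_div_of_forall_exists_le {ι κ : Type*} [Fintype ι] [Fintype κ]
    {δ : ι → κ → ℝ} {b c : κ → ℝ} (hδ : ∀ i j, 0 ≤ δ i j) (hsum : ∀ j, ∑ i, δ i j ≤ b j)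
    (hc : ∀ j, 0 < c j) (hcover : ∀ i, ∃ j, c j ≤ δ i j) :
    (Fintype.card ι : ℝ) ≤ ∑ j, b j / c j := by
  classical
  choose J hJ using hcover
  have hfiber : ∀ j, (#{i | J i = j} : ℝ) ≤ b j / c j := fun j => by
    rw [le_div_iff₀ (hc j)]
    calc (#{i | J i = j} : ℝ) * c j = ∑ i ∈ {i | J i = j}, c j := by
          rw [sum_const, nsmul_eq_mul]
      _ ≤ ∑ i ∈ {i | J i = j}, δ i j :=
          sum_le_sum fun i hi => (mem_filter.1 hi).2 ▸ hJ i
      _ ≤ ∑ i, δ i j :=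
          sum_le_sum_of_subset_of_nonneg (subset_univ _) fun i _ _ => hδ i j
      _ ≤ b j := hsum j
  calc (Fintype.card ι : ℝ) = ∑ j, (#{i | J i = j} : ℝ) := by
        rw [← card_univ]
        exact_mod_cast card_eq_sum_card_fiberwise fun i _ => mem_univ (J i)
    _ ≤ ∑ j, b j / c j := sum_le_sum fun j _ => hfiber j

section Lattice

variable {d : ℕ}

lemma dotZ_add (x y : Fin d → ℝ) (u : Fin d → ℤ) :
    dotZ d (x + y) u = dotZ d x u + dotZ d y u :=
  add_dotProduct x y _

lemma dotZ_smul (c : ℝ) (x : Fin d → ℝ) (u : Fin d → ℤ) :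
    dotZ d (c • x) u = c * dotZ d x u :=
  smul_dotProduct c x _

@[simp] lemma dotZ_zero (u : Fin d → ℤ) : dotZ d 0 u = 0 := zero_dotProduct _

@[simp] lemma dotZ_single (j : Fin d) (t : ℝ) (u : Fin d → ℤ) :
    dotZ d (Pi.single j t) u = t * u j :=
  single_dotProduct (v := fun i => (u i : ℝ)) t j

lemma continuous_dotZ (u : Fin d → ℤ) : Continuous fun x => dotZ d x u := by
  unfold dotZ; fun_prop

lemma convexOn_dotZ {s : Set (Fin d → ℝ)} (hs : Convex ℝ s) (u : Fin d → ℤ) :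
    ConvexOn ℝ s fun x => dotZ d x u :=
  (LinearMap.mk ⟨fun x => dotZ d x u, fun x y => dotZ_add x y u⟩
    fun c x => dotZ_smul c x u).convexOn hs

lemma eq_zero_of_forall_dotZ_eq {s : Set (Fin d → ℝ)} {x : Fin d → ℝ} (hx : x ∈ interior s)
    {u : Fin d → ℤ} (hu : ∀ y ∈ s, dotZ d y u = dotZ d x u) : u = 0 := by
  funext i
  obtain ⟨ε, hε, hmem⟩ := exists_pos_forall_add_smul_mem hx (Pi.single i 1)
  have h := hu _ (hmem ε (abs_of_pos hε).le)
  rw [dotZ_add, dotZ_smul, dotZ_single, one_mul, add_eq_left, mul_eq_zero] at h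
  exact_mod_cast h.resolve_left hε.ne'

lemma IsLatticePolytope.convex {Box : Set (Fin d → ℝ)} (h : IsLatticePolytope d Box) :
    Convex ℝ Box := by
  obtain ⟨S, rfl⟩ := h
  exact convex_convexHull ℝ _

lemma IsLatticePolytope.isCompact {Box : Set (Fin d → ℝ)} (h : IsLatticePolytope d Box) :
    IsCompact Box := by
  obtain ⟨S, rfl⟩ := h
  exact (S.finite_toSet.image _).isCompact_convexHull (𝕜 := ℝ)

end Lattice

section ICPA

variable {d : ℕ} {Box : Set (Fin d → ℝ)} {f : (Fin d → ℝ) → ℝ}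

lemma IsICPA.concaveOn (hf : IsICPA d Box f) : ConcaveOn ℝ Box f := by
  obtain ⟨S, hproj, hmax⟩ := hf
  set K := convexHull ℝ (latticeEmbed d '' (S : Set ((Fin d → ℤ) × ℤ)))
  have hK : Convex ℝ K := convex_convexHull ℝ _
  refine ⟨hproj ▸ hK.linear_image (LinearMap.fst ℝ _ _), fun x hx y hy a b ha hb hab => ?_⟩
  have hxy : (a • x + b • y, a • f x + b • f y) ∈ K := by
    simpa using hK (hmax x hx).1 (hmax y hy).1 ha hb hab
  exact (hmax _ (hproj ▸ ⟨_, hxy, rfl⟩)).2 hxy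

/-- Upper semicontinuity of `f`: its graph lies in the closed set `conv S`. -/
lemma IsICPA.le_of_eqOn_interior (hf : IsICPA d Box f) (hBox : Convex ℝ Box)
    (hint : (interior Box).Nonempty) {g : (Fin d → ℝ) → ℝ} (hg : Continuous g)
    (hfg : EqOn f g (interior Box)) {x : Fin d → ℝ} (hx : x ∈ Box) : g x ≤ f x := by
  obtain ⟨S, -, hmax⟩ := hf
  have hK : IsClosed (convexHull ℝ (latticeEmbed d '' (S : Set ((Fin d → ℤ) × ℤ)))) :=
    (S.finite_toSet.image _).isClosed_convexHull (𝕜 := ℝ)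
  have hxcl : x ∈ closure (interior Box) := by
    rw [hBox.closure_interior_eq_closure_of_nonempty_interior hint]
    exact subset_closure hx
  have := mem_closure_iff_nhdsWithin_neBot.1 hxcl
  suffices hxg : (x, g x) ∈ convexHull ℝ (latticeEmbed d '' (S : Set ((Fin d → ℤ) × ℤ))) from
    (hmax x hx).2 hxg
  refine hK.mem_of_tendsto (f := fun y => (y, g y)) (b := 𝓝[interior Box] x)
    ((continuous_id.prodMk hg).continuousAt.tendsto.mono_left nhdsWithin_le_nhds) ?_
  filter_upwards [self_mem_nhdsWithin] with y hy
  simpa [hfg hy] using (hmax y (interior_subset hy)).1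

end ICPA

section HeightOne

variable {d : ℕ} {Box : Set (Fin d → ℝ)} {f : (Fin d → ℝ) → ℝ}

/-- At an interior point, a height-one functional `y ↦ ⟨y, u⟩ + m f(y)` with `m ≤ 0` is convex
and maximal there, hence constant; this rules out `m = 0`, and `m = -1` would make `f` integral
affine. -/
lemma AtHeightOne.exists_of_mem_interior (hconc : ConcaveOn ℝ Box f) (hh : AtHeightOne d Box f)
    (hna : ¬ IsIntegralAffineOn d Box f) {x : Fin d → ℝ} (hx : x ∈ interior Box) :
    ∃ (u : Fin d → ℤ) (m : ℤ), |dotZ d x u + m * f x| = 1 ∧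
      (∀ y ∈ Box, dotZ d y u + m * f y ≤ dotZ d x u + m * f x) ∧
      (1 ≤ m ∨ m ≤ -2 ∧ ∀ y ∈ Box, dotZ d y u + m * f y = dotZ d x u + m * f x) := by
  obtain ⟨u, m, habs, hmax⟩ := hh x (interior_subset hx)
  refine ⟨u, m, habs, hmax, (le_or_gt 1 m).imp_right fun hm => ?_⟩
  have hmR : (m : ℝ) ≤ 0 := by exact_mod_cast Int.lt_add_one_iff.1 hm
  have hconv : ConvexOn ℝ Box fun y => dotZ d y u + m * f y :=
    ((convexOn_dotZ hconc.1 u).add (hconc.neg.smul (neg_nonneg.2 hmR))).congr fun y _ => by simp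
  have hconst : ∀ y ∈ Box, dotZ d y u + m * f y = dotZ d x u + m * f x :=
    fun y hy => hconv.eq_of_isMaxOn_of_mem_interior hx hmax hy
  refine ⟨?_, hconst⟩
  have hm0 : m ≠ 0 := by
    rintro rfl
    simp only [Int.cast_zero, zero_mul, add_zero] at hconst habs
    simp [eq_zero_of_forall_dotZ_eq hx hconst, dotZ] at habs
  have hm1 : m ≠ -1 := by
    rintro rfl
    obtain ⟨c, hc⟩ : ∃ c : ℤ, dotZ d x u - f x = c := by
      rcases abs_eq (zero_le_one' ℝ) |>.1 habs with h | h
      exacts [⟨1, by push_cast at h ⊢; linarith⟩, ⟨-1, by push_cast at h ⊢; linarith⟩]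
    refine hna ⟨u, -c, fun y hy => ?_⟩
    have := hconst y hy
    push_cast at this ⊢
    linarith
  omega

lemma AtHeightOne.apply_zero_eq_one_or_le_half (hconc : ConcaveOn ℝ Box f)
    (hh : AtHeightOne d Box f) (hna : ¬ IsIntegralAffineOn d Box f) (h0 : 0 ∈ interior Box)
    (hf0 : 0 < f 0) : f 0 = 1 ∨ f 0 ≤ 1 / 2 := by
  obtain ⟨u, m, habs, -, hm⟩ := hh.exists_of_mem_interior hconc hna h0
  rw [dotZ_zero, zero_add, abs_mul, abs_of_pos hf0] at habs
  rcases eq_or_ne m 1 with rfl | hm1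
  · left; simpa using habs
  · right
    have : (2 : ℝ) ≤ |(m : ℝ)| := by
      rw [← Int.cast_abs]; exact_mod_cast le_abs.2 (by omega)
    nlinarith

end HeightOne

section SupportingSlope

variable {d : ℕ} {Box : Set (Fin d → ℝ)} {f : (Fin d → ℝ) → ℝ}

def IsSupportingSlope (d : ℕ) (Box : Set (Fin d → ℝ)) (f : (Fin d → ℝ) → ℝ) (x : Fin d → ℝ)
    (u : Fin d → ℤ) : Prop :=
  dotZ d x u + f x = 1 ∧ ∀ y ∈ Box, dotZ d y u + f y ≤ 1

/-- When `f 0 = 1`, evaluating a height-one functional at `0` forces `m = 1` and value `1`. -/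
lemma AtHeightOne.exists_isSupportingSlope (hconc : ConcaveOn ℝ Box f)
    (hh : AtHeightOne d Box f) (hna : ¬ IsIntegralAffineOn d Box f) (h0 : 0 ∈ Box)
    (hf0 : f 0 = 1) {x : Fin d → ℝ} (hx : x ∈ interior Box) :
    ∃ u, IsSupportingSlope d Box f x u := by
  obtain ⟨u, m, habs, hmax, hm⟩ := hh.exists_of_mem_interior hconc hna hx
  have hval0 : dotZ d 0 u + m * f 0 = m := by rw [dotZ_zero, zero_add, hf0, mul_one]
  rcases hm with hm | ⟨hm, hconst⟩
  · have hle := hmax 0 h0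
    rw [hval0] at hle
    have hM : dotZ d x u + m * f x = 1 := by
      rcases abs_eq (zero_le_one' ℝ) |>.1 habs with h | h
      · exact h
      · have : (1 : ℝ) ≤ m := by exact_mod_cast hm
        linarith
    rw [hM] at hle hmax
    obtain rfl : m = 1 := le_antisymm (by exact_mod_cast hle) hm
    exact ⟨u, by simpa using hM, fun y hy => by simpa using hmax y hy⟩
  · have h := hconst 0 h0
    rw [hval0] at h
    rw [← h, abs_eq (zero_le_one' ℝ)] at habs
    have : m = 1 ∨ m = -1 := by exact_mod_cast habs
    omega

/-- Every supporting slope `w` satisfies `v j ≤ w j ≤ u j`, and the gap forces `u j < v j + 1`. -/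
lemma IsSupportingSlope.apply_eq {j : Fin d} {β : ℝ} (hβ : 0 < β) {u v w : Fin d → ℤ}
    {x : Fin d → ℝ} (hu : IsSupportingSlope d Box f (Pi.single j β) u)
    (hv : IsSupportingSlope d Box f (Pi.single j (-β)) v)
    (hp : Pi.single j β ∈ Box) (hq : Pi.single j (-β) ∈ Box)
    (hgap : 2 - β < f (Pi.single j β) + f (Pi.single j (-β)))
    (hw : IsSupportingSlope d Box f x w) : w j = u j := by
  have hwp := hw.2 _ hp
  have hwq := hw.2 _ hq
  simp only [dotZ_single, IsSupportingSlope] at hu hv hwp hwq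
  have hwu : (w j : ℝ) ≤ u j := le_of_mul_le_mul_left (by linarith [hu.1]) hβ
  have hvw : (v j : ℝ) ≤ w j := le_of_mul_le_mul_left (by linarith [hv.1]) hβ
  have huv : (u j : ℝ) < v j + 1 := lt_of_mul_lt_mul_left (by linarith [hu.1, hv.1]) hβ.le
  have : w j ≤ u j ∧ v j ≤ w j ∧ u j < v j + 1 :=
    ⟨by exact_mod_cast hwu, by exact_mod_cast hvw, by exact_mod_cast huv⟩
  omega

lemma exists_forall_isSupportingSlope
    (hslope : ∀ x ∈ interior Box, ∃ u, IsSupportingSlope d Box f x u) {β : Fin d → ℝ}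
    (hβ : ∀ j, 0 < β j) (hp : ∀ j, Pi.single j (β j) ∈ interior Box)
    (hq : ∀ j, Pi.single j (-β j) ∈ interior Box)
    (hgap : ∀ j, 2 - β j < f (Pi.single j (β j)) + f (Pi.single j (-β j))) :
    ∃ k, ∀ x ∈ interior Box, IsSupportingSlope d Box f x k := by
  choose! u hu using hslope
  refine ⟨fun j => u (Pi.single j (β j)) j, fun x hx => ?_⟩
  convert hu x hx using 1
  funext j
  exact ((hu _ (hp j)).apply_eq (hβ j) (hu _ (hq j)) (interior_subset (hp j))
    (interior_subset (hq j)) (hgap j) (hu x hx)).symm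

lemma IsICPA.isIntegralAffineOn_of_isSupportingSlope (hf : IsICPA d Box f)
    (hBox : Convex ℝ Box) (hint : (interior Box).Nonempty) {k : Fin d → ℤ}
    (hk : ∀ x ∈ interior Box, IsSupportingSlope d Box f x k) : IsIntegralAffineOn d Box f := by
  obtain ⟨x₀, hx₀⟩ := hint
  have hneg : ∀ y, dotZ d y (-k) = -dotZ d y k := fun y => by simp [dotZ]
  refine ⟨-k, 1, fun y hy => le_antisymm ?_ ?_⟩
  · linarith [(hk x₀ hx₀).2 y hy, hneg y, Int.cast_one (R := ℝ)]
  · refine hf.le_of_eqOn_interior hBox ⟨x₀, hx₀⟩ ((continuous_dotZ _).add continuous_const)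
      (fun x hx => ?_) hy
    simp only [Pi.add_apply]
    linarith [(hk x hx).1, hneg x, Int.cast_one (R := ℝ)]

/-- Otherwise `f` would not drop enough at `±(α_j/2) e_j`, and the supporting slopes there would
make `f` integral affine. -/
lemma IsICPA.exists_add_le_two_sub_of_apply_zero_eq_one (hf : IsICPA d Box f)
    (hh : AtHeightOne d Box f) (hna : ¬ IsIntegralAffineOn d Box f) (hBox : Convex ℝ Box)
    (h0 : 0 ∈ interior Box) (hf0 : f 0 = 1) {α : Fin d → ℝ} (hα : ∀ j, 0 < α j)
    (hp : ∀ j, Pi.single j (α j) ∈ Box) (hq : ∀ j, Pi.single j (-α j) ∈ Box) :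
    ∃ j, f (Pi.single j (α j)) + f (Pi.single j (-α j)) ≤ 2 - α j := by
  by_contra! hgap
  have hconc := hf.concaveOn
  have hhalf : ∀ j t, Pi.single j t ∈ Box →
      Pi.single j (t / 2) ∈ interior Box ∧
        (1 + f (Pi.single j t)) / 2 ≤ f (Pi.single j (t / 2)) := by
    intro j t ht
    have hmid :
        (1 / 2 : ℝ) • (0 : Fin d → ℝ) + (1 / 2 : ℝ) • Pi.single j t = Pi.single j (t / 2) := by
      rw [smul_zero, zero_add, ← Pi.single_smul', smul_eq_mul]
      congr 1
      ring
    refine ⟨hmid ▸ hBox.combo_interior_self_mem_interior h0 ht one_half_pos one_half_pos.le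
      (add_halves 1), ?_⟩
    have := hconc.2 (interior_subset h0) ht one_half_pos.le one_half_pos.le (add_halves 1)
    rw [hmid, smul_eq_mul, smul_eq_mul, hf0] at this
    linarith
  obtain ⟨k, hk⟩ := exists_forall_isSupportingSlope
    (fun x hx => hh.exists_isSupportingSlope hconc hna (interior_subset h0) hf0 hx)
    (β := fun j => α j / 2) (fun j => half_pos (hα j)) (fun j => (hhalf j _ (hp j)).1)
    (fun j => by simpa [neg_div] using (hhalf j _ (hq j)).1)
    (fun j => by
      have h₁ := (hhalf j _ (hp j)).2
      have h₂ := (hhalf j _ (hq j)).2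
      simp only [neg_div] at h₂ ⊢
      linarith [hgap j])
  exact hna (hf.isIntegralAffineOn_of_isSupportingSlope hBox ⟨0, h0⟩ hk)

lemma IsICPA.exists_add_le_two_sub_of_apply_zero_pos [Nonempty (Fin d)] (hf : IsICPA d Box f)
    (hh : AtHeightOne d Box f) (hna : ¬ IsIntegralAffineOn d Box f) (hBox : Convex ℝ Box)
    (h0 : 0 ∈ interior Box) (hf0 : 0 < f 0) {α : Fin d → ℝ} (hα : ∀ j, 0 < α j ∧ α j ≤ 1)
    (hp : ∀ j, Pi.single j (α j) ∈ Box) (hq : ∀ j, Pi.single j (-α j) ∈ Box) :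
    ∃ j, f (Pi.single j (α j)) + f (Pi.single j (-α j)) ≤ 2 - α j := by
  rcases hh.apply_zero_eq_one_or_le_half hf.concaveOn hna h0 hf0 with h1 | hhalf
  · exact hf.exists_add_le_two_sub_of_apply_zero_eq_one hh hna hBox h0 h1 (fun j => (hα j).1)
      hp hq
  · obtain ⟨j⟩ := ‹Nonempty (Fin d)›
    have := hf.concaveOn.add_apply_neg_le (hp j) (by simpa [Pi.single_neg] using hq j)
    rw [← Pi.single_neg] at this
    exact ⟨j, by linarith [(hα j).2]⟩

end SupportingSlope

section Alpha

variable {d : ℕ} {Box : Set (Fin d → ℝ)}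

lemma alphaV_spec (hcomp : IsCompact Box) (hconv : Convex ℝ Box) (h0 : 0 ∈ interior Box)
    {v : Fin d → ℤ} (hv : v ≠ 0) :
    0 < alphaV d Box v ∧ alphaV d Box v ≤ 1 ∧
      alphaV d Box v • (fun i => (v i : ℝ)) ∈ Box ∧
      -(alphaV d Box v • fun i => (v i : ℝ)) ∈ Box := by
  set w : Fin d → ℝ := fun i => (v i : ℝ)
  set T := {a : ℝ | 0 ≤ a ∧ a • w ∈ Box ∧ -(a • w) ∈ Box}
  change 0 < min 1 (sSup T) ∧ min 1 (sSup T) ≤ 1 ∧ min 1 (sSup T) • w ∈ Box ∧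
    -(min 1 (sSup T) • w) ∈ Box
  have hw : 0 < ‖w‖ :=
    norm_pos_iff.2 fun h => hv (funext fun i => by simpa [w] using congr_fun h i)
  obtain ⟨R, hR⟩ := isBounded_iff_forall_norm_le.1 hcomp.isBounded
  have hbdd : BddAbove T := ⟨R / ‖w‖, fun a ha => by
    rw [le_div_iff₀ hw, ← Real.norm_of_nonneg ha.1, ← norm_smul]
    exact hR _ ha.2.1⟩
  have hclosed : IsClosed T :=
    isClosed_Ici.inter ((hcomp.isClosed.preimage (by fun_prop)).inter
      (hcomp.isClosed.preimage (by fun_prop)))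
  obtain ⟨ε, hε, hεmem⟩ := exists_pos_forall_add_smul_mem h0 w
  have hεT : ε ∈ T := ⟨hε.le, by simpa using hεmem ε (abs_of_pos hε).le,
    by simpa [neg_smul] using hεmem (-ε) (by rw [abs_neg, abs_of_pos hε])⟩
  have hsup : sSup T ∈ T := hclosed.csSup_mem ⟨ε, hεT⟩ hbdd
  have hpos : 0 < sSup T := hε.trans_le (le_csSup hbdd hεT)
  refine ⟨lt_min one_pos hpos, min_le_left _ _, ?_⟩
  have ht : min 1 (sSup T) / sSup T ∈ Icc (0 : ℝ) 1 :=
    ⟨by positivity, div_le_one_of_le₀ (min_le_right _ _) hpos.le⟩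
  have hscale : min 1 (sSup T) • w = (min 1 (sSup T) / sSup T) • sSup T • w := by
    rw [smul_smul, div_mul_cancel₀ _ hpos.ne']
  rw [hscale, ← smul_neg]
  exact ⟨hconv.smul_mem_of_zero_mem (interior_subset h0) hsup.2.1 ht,
    hconv.smul_mem_of_zero_mem (interior_subset h0) hsup.2.2 ht⟩

lemma alphaV_single_spec (hcomp : IsCompact Box) (hconv : Convex ℝ Box) (h0 : 0 ∈ interior Box)
    (j : Fin d) :
    (0 < alphaV d Box (Pi.single j 1) ∧ alphaV d Box (Pi.single j 1) ≤ 1) ∧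
      Pi.single j (alphaV d Box (Pi.single j 1)) ∈ Box ∧
      Pi.single j (-alphaV d Box (Pi.single j 1)) ∈ Box := by
  have hcast : (fun i => ((Pi.single j 1 : Fin d → ℤ) i : ℝ)) = Pi.single j 1 := by
    funext i
    rcases eq_or_ne i j with rfl | h <;> simp [*]
  obtain ⟨hpos, hle, hp, hq⟩ := alphaV_spec hcomp hconv h0 (Pi.single_ne_zero_iff.2 one_ne_zero)
  rw [hcast, ← Pi.single_smul', smul_eq_mul, mul_one] at hp hq
  exact ⟨⟨hpos, hle⟩, hp, by rwa [Pi.single_neg]⟩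

end Alpha

/-- Any normalized Fano data on `Box` has at most `c(Box) = ∑_j 4/α_{e_j}` functions. -/
theorem normalized_fano_data_le_cBox
    (d : ℕ) (hd : 0 < d) (Box : Set (Fin d → ℝ)) (hlat : IsLatticePolytope d Box)
    (h0 : (0 : Fin d → ℝ) ∈ interior Box)
    (n : ℕ) (f : Fin n → (Fin d → ℝ) → ℝ)
    (hf : NormalizedFanoData d n Box f) :
    (n : ℝ) ≤ ∑ j : Fin d, 4 / alphaV d Box (Pi.single j 1) := by
  obtain ⟨hicpa, hh, hpos, hna, hsum, -, -⟩ := hf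
  have : Nonempty (Fin d) := ⟨⟨0, hd⟩⟩
  set α : Fin d → ℝ := fun j => alphaV d Box (Pi.single j 1)
  have hα := alphaV_single_spec hlat.isCompact hlat.convex h0
  have hle : ∀ i j, f i (Pi.single j (α j)) + f i (Pi.single j (-α j)) ≤ 2 := fun i j => by
    have hf0 : f i 0 ≤ 1 := by
      rcases (hh i).apply_zero_eq_one_or_le_half (hicpa i).concaveOn (hna i) h0 (hpos i) with
        h | h <;> linarith
    have := (hicpa i).concaveOn.add_apply_neg_le (hα j).2.1
      (by rw [← Pi.single_neg]; exact (hα j).2.2)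
    rw [← Pi.single_neg] at this
    linarith
  have hcount := card_le_sum_div_of_forall_exists_le
    (δ := fun i j => 1 - (f i (Pi.single j (α j)) + f i (Pi.single j (-α j))) / 2)
    (b := fun _ => 2) (c := fun j => α j / 2)
    (fun i j => by linarith [hle i j])
    (fun j => by
      simp only [Finset.sum_sub_distrib, Finset.sum_const, Finset.card_univ, Fintype.card_fin,
        nsmul_eq_mul, mul_one, ← Finset.sum_div, Finset.sum_add_distrib]
      linarith [hsum _ (hα j).2.1, hsum _ (hα j).2.2])
    (fun j => half_pos (hα j).1.1)
    (fun i => ((hicpa i).exists_add_le_two_sub_of_apply_zero_pos (hh i) (hna i) hlat.convex h0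
      (hpos i) (fun j => (hα j).1) (fun j => (hα j).2.1) (fun j => (hα j).2.2)).imp
        fun j hj => by linarith)
  simpa [div_div_eq_mul_div, α, (by norm_num : (2 : ℝ) * 2 = 4)] using hcount
end
end

section
/- Let a, b ∈ ℤ with a ≤ −1 and b ≥ 1, and let Box = [a,b] ⊆ ℝ. Let f be an integral concave piecewise-affine function on Box which is at height one, satisfies f(0) > 0, and is not of the form x ↦ u·x + c with u, c ∈ ℤ. Then f(−1) ≤ 0 or f(1) ≤ 0. -/
open scoped BigOperators

noncomputable section

/-!
Write `F t = f (fun _ => t)` on `[a, b]` and suppose `F (-1)`, `F 0`, `F 1` are all positive. At an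
interior point `t`, let `s U + m y ≤ ±1` be the height-one supporting half-plane of the graph.
Testing it at `0` and `±1` forces `U = 0`: for `m > 0` directly, for `m < 0` after noting that
`s ↦ s U + m F s` is convex with an interior maximum, hence constant. So every interior point
is a maximum of `F`, with value `1 / |m| ≤ 1`. A maximum of an integral concave function is
attained at a lattice point and is an integer, so `F ≡ 1` on `(a, b)`, and by closedness of the
hypograph also on `[a, b]`; then `f` is integral affine.
-/

open Set

namespace IsICPA

variable {d : ℕ} {Box : Set (Fin d → ℝ)} {f : (Fin d → ℝ) → ℝ}

theorem concaveOn_s13 (h : IsICPA d Box f) : ConcaveOn ℝ Box f := by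
  obtain ⟨S, hfst, hgreatest⟩ := h
  have hK : Convex ℝ (convexHull ℝ (latticeEmbed d '' (S : Set ((Fin d → ℤ) × ℤ)))) :=
    convex_convexHull ℝ _
  have hBox : Convex ℝ Box := hfst ▸ hK.linear_image (LinearMap.fst ℝ _ ℝ)
  refine ⟨hBox, fun x hx y hy μ ν hμ hν hμν => (hgreatest _ (hBox hx hy hμ hν hμν)).2 ?_⟩
  simpa using hK (hgreatest x hx).1 (hgreatest y hy).1 hμ hν hμν

theorem exists_int_eq_of_isMaxOn (h : IsICPA d Box f) {x : Fin d → ℝ} (hx : x ∈ Box)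
    (hmax : IsMaxOn f Box x) : ∃ n : ℤ, f x = n := by
  obtain ⟨S, hfst, hgreatest⟩ := h
  have hS : S.Nonempty := by
    simpa using (convexHull_nonempty_iff (𝕜 := ℝ)).1 ⟨_, (hgreatest x hx).1⟩
  obtain ⟨p, hpS, hp⟩ := S.exists_max_image (·.2) hS
  have hK_le : convexHull ℝ (latticeEmbed d '' (S : Set ((Fin d → ℤ) × ℤ))) ⊆
      {q | q.2 ≤ p.2} := by
    refine convexHull_min ?_ (convex_halfSpace_le (LinearMap.snd ℝ _ ℝ).isLinear _)
    rintro _ ⟨q, hq, rfl⟩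
    exact (Int.cast_le (R := ℝ)).2 (hp q hq)
  have hpK : latticeEmbed d p ∈ convexHull ℝ (latticeEmbed d '' (S : Set ((Fin d → ℤ) × ℤ))) :=
    subset_convexHull ℝ _ (mem_image_of_mem _ hpS)
  have hpBox : (latticeEmbed d p).1 ∈ Box := hfst ▸ mem_image_of_mem Prod.fst hpK
  exact ⟨p.2, le_antisymm (hK_le (hgreatest x hx).1)
    (((hgreatest _ hpBox).2 hpK).trans (isMaxOn_iff.1 hmax _ hpBox))⟩

theorem isClosed_superlevel (h : IsICPA d Box f) (c : ℝ) : IsClosed {x | x ∈ Box ∧ c ≤ f x} := by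
  obtain ⟨S, hfst, hgreatest⟩ := h
  set K := convexHull ℝ (latticeEmbed d '' (S : Set ((Fin d → ℤ) × ℤ)))
  have hK : IsCompact K := (S.finite_toSet.image _).isCompact_convexHull (𝕜 := ℝ)
  have hsuperlevel : {x | x ∈ Box ∧ c ≤ f x} = Prod.fst '' (K ∩ {q | c ≤ q.2}) := by
    ext x
    constructor
    · rintro ⟨hx, hc⟩
      exact ⟨(x, f x), ⟨(hgreatest x hx).1, hc⟩, rfl⟩
    · rintro ⟨q, ⟨hqK, hc⟩, rfl⟩
      have hq : q.1 ∈ Box := hfst ▸ mem_image_of_mem Prod.fst hqK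
      exact ⟨hq, hc.trans ((hgreatest _ hq).2 hqK)⟩
  rw [hsuperlevel]
  exact ((hK.inter_right (isClosed_le continuous_const continuous_snd)).image
    continuous_fst).isClosed

end IsICPA

theorem ConvexOn.eq_of_isMaxOn_of_mem_Ioo {𝕜 β : Type*} [Field 𝕜] [LinearOrder 𝕜]
    [IsStrictOrderedRing 𝕜] [AddCommMonoid β] [LinearOrder β] [IsOrderedCancelAddMonoid β]
    [Module 𝕜 β] [PosSMulStrictMono 𝕜 β] {G : 𝕜 → β} {a b t s : 𝕜}
    (hG : ConvexOn 𝕜 (Icc a b) G) (ht : t ∈ Ioo a b) (hmax : IsMaxOn G (Icc a b) t)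
    (hs : s ∈ Icc a b) : G s = G t := by
  have hab : a ≤ b := (ht.1.trans ht.2).le
  refine le_antisymm (isMaxOn_iff.1 hmax s hs) ?_
  rcases le_total s t with hst | hts
  · exact hG.le_left_of_right_le'' hs (right_mem_Icc.2 hab) hst ht.2
      (isMaxOn_iff.1 hmax b (right_mem_Icc.2 hab))
  · exact hG.le_right_of_left_le'' (left_mem_Icc.2 hab) hs ht.1 hts
      (isMaxOn_iff.1 hmax a (left_mem_Icc.2 hab))

section HeightOneSupport

variable {F : ℝ → ℝ} {a b t : ℝ} {U m : ℤ}

theorem ne_zero_of_height_one_support (ht : t ∈ Ioo a b) (hE : |t * U + m * F t| = 1)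
    (hsupp : ∀ s ∈ Icc a b, s * U + m * F s ≤ t * U + m * F t) : m ≠ 0 := by
  rintro rfl
  simp only [Int.cast_zero, zero_mul, add_zero] at hE hsupp
  have hab : a ≤ b := (ht.1.trans ht.2).le
  have hU_nonneg := hsupp a (left_mem_Icc.2 hab)
  have hU_nonpos := hsupp b (right_mem_Icc.2 hab)
  have hU : (U : ℝ) = 0 := by nlinarith [ht.1, ht.2]
  simp [hU] at hE

theorem isMaxOn_and_le_one_of_height_one_support_of_pos (ha : a ≤ -1) (hb : 1 ≤ b)
    (hFm1 : 0 < F (-1)) (hF0 : 0 < F 0) (hF1 : 0 < F 1) (hm : 0 < m)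
    (hE : |t * U + m * F t| = 1)
    (hsupp : ∀ s ∈ Icc a b, s * U + m * F s ≤ t * U + m * F t) :
    IsMaxOn F (Icc a b) t ∧ F t ≤ 1 := by
  have hm' : (1 : ℝ) ≤ m := by exact_mod_cast hm
  have hE1 : t * U + m * F t = 1 := by
    have h0 := hsupp 0 ⟨by linarith, by linarith⟩
    have hmF0 := mul_pos (zero_lt_one.trans_le hm') hF0
    rw [← hE, abs_of_pos (by linarith)]
  have hU : U = 0 := by
    have h1 := hsupp 1 ⟨by linarith, hb⟩
    have hm1 := hsupp (-1) ⟨ha, by linarith⟩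
    have hmF1 := mul_pos (zero_lt_one.trans_le hm') hF1
    have hmFm1 := mul_pos (zero_lt_one.trans_le hm') hFm1
    have hU_abs : |(U : ℝ)| < 1 := abs_lt.2 ⟨by linarith, by linarith⟩
    exact Int.abs_lt_one_iff.1 (by exact_mod_cast hU_abs)
  simp only [hU, Int.cast_zero, mul_zero, zero_add] at hE1 hsupp
  refine ⟨isMaxOn_iff.2 fun s hs => le_of_mul_le_mul_left (hsupp s hs) (by linarith), ?_⟩
  nlinarith

theorem ConcaveOn.isMaxOn_and_le_one_of_height_one_support_of_neg
    (hF : ConcaveOn ℝ (Icc a b) F) (ha : a ≤ -1) (hb : 1 ≤ b) (ht : t ∈ Ioo a b)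
    (hFm1 : 0 < F (-1)) (hF0 : 0 < F 0) (hF1 : 0 < F 1) (hm : m < 0)
    (hE : |t * U + m * F t| = 1)
    (hsupp : ∀ s ∈ Icc a b, s * U + m * F s ≤ t * U + m * F t) :
    IsMaxOn F (Icc a b) t ∧ F t ≤ 1 := by
  have hm' : (m : ℝ) ≤ -1 := by exact_mod_cast Int.le_sub_one_of_lt hm
  have hG : ConvexOn ℝ (Icc a b) fun s => s * U + m * F s := by
    refine ⟨convex_Icc a b, fun x hx y hy μ ν hμ hν hμν => ?_⟩
    have hconc := mul_le_mul_of_nonpos_left (hF.2 hx hy hμ hν hμν) (by linarith : (m : ℝ) ≤ 0)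
    simp only [smul_eq_mul] at hconc ⊢
    linarith
  have hconst : ∀ s ∈ Icc a b, s * U + m * F s = t * U + m * F t :=
    fun s hs => hG.eq_of_isMaxOn_of_mem_Ioo ht (isMaxOn_iff.2 hsupp) hs
  have hE1 : t * U + m * F t = -1 := by
    have h0 := hconst 0 ⟨by linarith, by linarith⟩
    have hmF0 := mul_neg_of_neg_of_pos (by linarith : (m : ℝ) < 0) hF0
    rw [← hE, abs_of_neg (by linarith), neg_neg]
  have hU : U = 0 := by
    have h1 := hconst 1 ⟨by linarith, hb⟩
    have hm1 := hconst (-1) ⟨ha, by linarith⟩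
    have hmF1 := mul_neg_of_neg_of_pos (by linarith : (m : ℝ) < 0) hF1
    have hmFm1 := mul_neg_of_neg_of_pos (by linarith : (m : ℝ) < 0) hFm1
    have hU_abs : |(U : ℝ)| < 1 := abs_lt.2 ⟨by linarith, by linarith⟩
    exact Int.abs_lt_one_iff.1 (by exact_mod_cast hU_abs)
  simp only [hU, Int.cast_zero, mul_zero, zero_add] at hE1 hconst
  refine ⟨isMaxOn_iff.2 fun s hs => (mul_left_cancel₀ (by linarith) (hconst s hs)).le, ?_⟩
  nlinarith

theorem ConcaveOn.isMaxOn_and_le_one_of_height_one_support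
    (hF : ConcaveOn ℝ (Icc a b) F) (ha : a ≤ -1) (hb : 1 ≤ b) (ht : t ∈ Ioo a b)
    (hFm1 : 0 < F (-1)) (hF0 : 0 < F 0) (hF1 : 0 < F 1)
    (hE : |t * U + m * F t| = 1)
    (hsupp : ∀ s ∈ Icc a b, s * U + m * F s ≤ t * U + m * F t) :
    IsMaxOn F (Icc a b) t ∧ F t ≤ 1 := by
  rcases lt_trichotomy m 0 with hm | hm | hm
  · exact hF.isMaxOn_and_le_one_of_height_one_support_of_neg ha hb ht hFm1 hF0 hF1 hm hE hsupp
  · exact absurd hm (ne_zero_of_height_one_support ht hE hsupp)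
  · exact isMaxOn_and_le_one_of_height_one_support_of_pos ha hb hFm1 hF0 hF1 hm hE hsupp

end HeightOneSupport

section Interval

variable {a b : ℤ} {f : (Fin 1 → ℝ) → ℝ}

theorem IsICPA.concaveOn_Icc (h : IsICPA 1 (intervalBox a b) f) :
    ConcaveOn ℝ (Icc (a : ℝ) b) fun t => f fun _ => t :=
  h.concaveOn_s13.comp_linearMap (LinearMap.pi fun _ => LinearMap.id)

theorem IsICPA.exists_int_eq_of_isMaxOn_Icc (h : IsICPA 1 (intervalBox a b) f) {t : ℝ}
    (ht : t ∈ Icc (a : ℝ) b) (hmax : IsMaxOn (fun s => f fun _ => s) (Icc (a : ℝ) b) t) :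
    ∃ n : ℤ, f (fun _ => t) = n :=
  h.exists_int_eq_of_isMaxOn (x := fun _ => t) ht <| isMaxOn_iff.2 fun y hy => by
    rw [eq_const_of_unique y]
    exact isMaxOn_iff.1 hmax _ hy

theorem IsICPA.le_of_forall_Ioo_le (h : IsICPA 1 (intervalBox a b) f) (hab : (a : ℝ) < b)
    {c : ℝ} (hc : ∀ s ∈ Ioo (a : ℝ) b, c ≤ f fun _ => s) {t : ℝ} (ht : t ∈ Icc (a : ℝ) b) :
    c ≤ f fun _ => t := by
  have hclosed : IsClosed {s : ℝ | s ∈ Icc (a : ℝ) b ∧ c ≤ f fun _ => s} :=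
    (h.isClosed_superlevel c).preimage (continuous_pi fun _ => continuous_id)
  have hsub : Ioo (a : ℝ) b ⊆ {s : ℝ | s ∈ Icc (a : ℝ) b ∧ c ≤ f fun _ => s} :=
    fun s hs => ⟨Ioo_subset_Icc_self hs, hc s hs⟩
  rw [← closure_Ioo hab.ne] at ht
  exact (closure_minimal hsub hclosed ht).2

theorem AtHeightOne.exists_support_Icc (h : AtHeightOne 1 (intervalBox a b) f) {t : ℝ}
    (ht : t ∈ Icc (a : ℝ) b) :
    ∃ U m : ℤ, |t * U + m * f (fun _ => t)| = 1 ∧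
      ∀ s ∈ Icc (a : ℝ) b, s * U + m * f (fun _ => s) ≤ t * U + m * f (fun _ => t) := by
  obtain ⟨u, m, hE, hsupp⟩ := h (fun _ => t) ht
  refine ⟨u 0, m, by simpa [dotZ] using hE, fun s hs => ?_⟩
  simpa [dotZ] using hsupp (fun _ => s) hs

end Interval

/-- For a translated function of a normalized two-dimensional Fano CDP on `[a,b]` with
`a ≤ -1 < 1 ≤ b`, either `f(-1) ≤ 0` or `f(1) ≤ 0`. -/
theorem one_value_nonpositive
    (a b : ℤ) (ha : a ≤ -1) (hb : 1 ≤ b)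
    (f : (Fin 1 → ℝ) → ℝ)
    (hicpa : IsICPA 1 (intervalBox a b) f)
    (hht : AtHeightOne 1 (intervalBox a b) f)
    (hf0 : 0 < f 0)
    (hnl : ¬ IsIntegralAffineOn 1 (intervalBox a b) f) :
    f (fun _ => -1) ≤ 0 ∨ f (fun _ => 1) ≤ 0 := by
  by_contra! hpos
  have ha' : (a : ℝ) ≤ -1 := by exact_mod_cast ha
  have hb' : (1 : ℝ) ≤ b := by exact_mod_cast hb
  have h0 : (0 : ℝ) ∈ Ioo (a : ℝ) b := ⟨by linarith, by linarith⟩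
  have hmax : ∀ t ∈ Ioo (a : ℝ) b, IsMaxOn (fun s => f fun _ => s) (Icc (a : ℝ) b) t ∧
      f (fun _ => t) ≤ 1 := fun t ht => by
    obtain ⟨U, m, hE, hsupp⟩ := hht.exists_support_Icc (Ioo_subset_Icc_self ht)
    exact hicpa.concaveOn_Icc.isMaxOn_and_le_one_of_height_one_support ha' hb' ht hpos.1 hf0
      hpos.2 hE hsupp
  have hf0_eq : f (fun _ => 0) = 1 := by
    obtain ⟨n, hn⟩ := hicpa.exists_int_eq_of_isMaxOn_Icc (Ioo_subset_Icc_self h0) (hmax 0 h0).1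
    have hn_pos : (0 : ℝ) < n := by rw [← hn]; exact hf0
    have hn_le : (n : ℝ) ≤ 1 := hn ▸ (hmax 0 h0).2
    have : n = 1 := by norm_cast at hn_pos hn_le; omega
    rw [hn, this, Int.cast_one]
  have hIoo : ∀ t ∈ Ioo (a : ℝ) b, 1 ≤ f fun _ => t := fun t ht =>
    hf0_eq ▸ isMaxOn_iff.1 (hmax t ht).1 0 (Ioo_subset_Icc_self h0)
  refine hnl ⟨0, 1, fun x hx => ?_⟩
  have hx1 : f x = 1 := (congrArg f (eq_const_of_unique x)).trans <|
    le_antisymm (hf0_eq ▸ isMaxOn_iff.1 (hmax 0 h0).1 _ hx)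
      (hicpa.le_of_forall_Ioo_le (by linarith) hIoo hx)
  simpa [dotZ] using hx1

end
end
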